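/- The reduction to parametric derivatives is well defined: for a passive orthonomic system, any Q ∈ A has a unique reduction Q̃ ∈ B with Q̃ ≡ Q mod Δ; in particular the result of the reduction algorithm does not depend on the choice of α when (j,K) = (i^α, J^α L) = (i^β, J^β M), by the passivity assumption D_L P^α = D_M P^β. -/

import Mathlib

open MvPolynomial

/-- Jet variables: the independent variables `x i` and the derivatives `u^α_K`. -/
abbrev JetVar (p q : ℕ) := Sum (Fin p) (Fin q × (Fin p →₀ ℕ))

/-- The ring `A` of differential (polynomial) functions on the jet manifold. -/
abbrev JetRing (p q : ℕ) := MvPolynomial (JetVar p q) ℚ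

/-- The total differential operator `D_i = ∂/∂x_i + Σ_{α,K} u^α_{Ki} ∂/∂u^α_K`. -/
noncomputable def totalD (p q : ℕ) (i : Fin p) :
    Derivation ℚ (JetRing p q) (JetRing p q) :=
  MvPolynomial.mkDerivation ℚ (fun v => match v with
    | Sum.inl j => if i = j then 1 else 0
    | Sum.inr (α, K) => X (Sum.inr (α, K + Finsupp.single i 1)))

/-- The multi total differential operator `D_K = D_1^{K_1} ∘ ⋯ ∘ D_p^{K_p}`. -/
noncomputable def DmultiK (p q : ℕ) (K : Fin p →₀ ℕ) :
    Module.End ℚ (JetRing p q) :=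
  (List.finRange p).foldr (fun i f => ((totalD p q i).toLinearMap ^ (K i)) * f) 1

/-- A system of PDEs `u^{i^α}_{J^α} = P^α` together with a ranking `rk` on
`ℕ_q × ℕ^p`: a total order which is positive and compatible with addition,
and with all `J^α ≠ 0`. -/
structure OrthoSystem (p q n : ℕ) where
  ii : Fin n → Fin q
  JJ : Fin n → (Fin p →₀ ℕ)
  P : Fin n → JetRing p q
  rk : (Fin q × (Fin p →₀ ℕ)) → (Fin q × (Fin p →₀ ℕ)) → Prop
  rk_refl : ∀ a, rk a a
  rk_total : ∀ a b, rk a b ∨ rk b a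
  rk_antisymm : ∀ a b, rk a b → rk b a → a = b
  rk_trans : ∀ a b c, rk a b → rk b c → rk a c
  rk_pos : ∀ (j : Fin q) (K L : Fin p →₀ ℕ), rk (j, K) (j, K + L)
  rk_compat : ∀ (i j : Fin q) (J K L : Fin p →₀ ℕ),
    rk (i, J) (j, K) ↔ rk (i, J + L) (j, K + L)
  J_ne : ∀ α, JJ α ≠ 0

variable {p q n : ℕ}

/-- The strict part of the ranking. -/
def OrthoSystem.rlt (S : OrthoSystem p q n) (a b : Fin q × (Fin p →₀ ℕ)) : Prop :=
  S.rk a b ∧ a ≠ b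

/-- A derivative `u^j_K` is principal if `(j,K) = (i^α, J^α L)` for some `α, L`. -/
def OrthoSystem.principal (S : OrthoSystem p q n) (v : Fin q × (Fin p →₀ ℕ)) : Prop :=
  ∃ (α : Fin n) (L : Fin p →₀ ℕ), v = (S.ii α, S.JJ α + L)

/-- `Q` belongs to the subring `B` of functions of parametric derivatives only. -/
def OrthoSystem.inB (S : OrthoSystem p q n) (Q : JetRing p q) : Prop :=
  ∀ (jK : Fin q × (Fin p →₀ ℕ)), Sum.inr jK ∈ Q.vars → ¬ S.principal jK

/-- Orthonomy: `P^α` depends only on parametric derivatives `u^j_K` with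
`(j,K) < (i^α, J^α)`. -/
def OrthoSystem.orthonomic (S : OrthoSystem p q n) : Prop :=
  ∀ (α : Fin n) (jK : Fin q × (Fin p →₀ ℕ)), Sum.inr jK ∈ (S.P α).vars →
    ¬ S.principal jK ∧ S.rlt jK (S.ii α, S.JJ α)

/-- Passivity: `(i^α, J^α K) = (i^β, J^β L)` implies `D_K P^α = D_L P^β`. -/
def OrthoSystem.passive (S : OrthoSystem p q n) : Prop :=
  ∀ (α β : Fin n) (K L : Fin p →₀ ℕ),
    (S.ii α, S.JJ α + K) = (S.ii β, S.JJ β + L) →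
    DmultiK p q K (S.P α) = DmultiK p q L (S.P β)

/-- The differential ideal generated by the `Δ^α = u^{i^α}_{J^α} − P^α`. -/
noncomputable def OrthoSystem.diffIdeal (S : OrthoSystem p q n) : Ideal (JetRing p q) :=
  Ideal.span { x | ∃ (α : Fin n) (L : Fin p →₀ ℕ),
    x = DmultiK p q L (X (Sum.inr (S.ii α, S.JJ α)) - S.P α) }

open Classical in
/-- The reduction `Q ↦ Q̃`: the element of `B` congruent to `Q` modulo the
differential ideal generated by `Δ` (when it exists). -/
noncomputable def OrthoSystem.red (S : OrthoSystem p q n) (Q : JetRing p q) :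
    JetRing p q :=
  if h : ∃ R, S.inB R ∧ Q - R ∈ S.diffIdeal then h.choose else 0

/-- The intrinsic multi-differential operator `𝔇_K P = (D_K P)~`. -/
noncomputable def OrthoSystem.dfrakK (S : OrthoSystem p q n) (K : Fin p →₀ ℕ)
    (Q : JetRing p q) : JetRing p q :=
  S.red (DmultiK p q K Q)

/-- The intrinsic total differential operator `𝔇_j P = (D_j P)~`. -/
noncomputable def OrthoSystem.dfrak (S : OrthoSystem p q n) (j : Fin p)
    (Q : JetRing p q) : JetRing p q :=
  S.red (totalD p q j Q)

open Classical in
/-- The intrinsic prolongation `𝔭𝔯_Q = Σ_{(j,K)∈S} (𝔇_K Q^j) ∂/∂u^j_K`. -/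
noncomputable def OrthoSystem.iprolong (S : OrthoSystem p q n)
    (Q : Fin q → JetRing p q) : Derivation ℚ (JetRing p q) (JetRing p q) :=
  MvPolynomial.mkDerivation ℚ (fun v => match v with
    | Sum.inl _ => 0
    | Sum.inr (j, K) => if S.principal (j, K) then 0 else S.dfrakK K (Q j))

/-!
The reduction is a `ℚ`-algebra endomorphism `φ` of `A` which fixes the parametric derivatives
and sends a principal `u^j_K = u^{i^β}_{J^β M}` to `φ (D_M P^β)`. This is a legitimate recursion
since, by orthonomy, `D_M P^β` only involves derivatives strictly below `(j, K)` in the ranking,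
which is well founded because it extends the well-quasi-order of Dickson's lemma; by passivity
it does not depend on the choice of `(β, M)`. Then `φ Q ∈ B`, `Q ≡ φ Q mod Δ`, `φ` kills every
generator `D_L Δ^α` of the differential ideal, and `φ` is the identity on `B`: if `R, R' ∈ B`
are both congruent to `Q`, then `R = φ R = φ R' = R'`.
-/

theorem Derivation.mapsTo_adjoin {R A : Type*} [CommSemiring R] [CommSemiring A] [Algebra R A]
    (D : Derivation R A A) {s : Set A} {T : Subalgebra R A} (hs : s ⊆ T)
    (hD : Set.MapsTo D s T) : Set.MapsTo D (Algebra.adjoin R s) T := by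
  intro x hx
  induction hx using Algebra.adjoin_induction with
  | mem x hx => exact hD hx
  | algebraMap r => rw [Derivation.map_algebraMap]; exact zero_mem T
  | add x y _ _ hx hy => rw [map_add]; exact add_mem hx hy
  | mul x y hx' hy' hx hy =>
    have hxT : x ∈ T := Algebra.adjoin_le hs hx'
    have hyT : y ∈ T := Algebra.adjoin_le hs hy'
    rw [Derivation.leibniz, smul_eq_mul, smul_eq_mul]
    exact add_mem (mul_mem hxT hy) (mul_mem hyT hx)

theorem MvPolynomial.aeval_mem {σ R A : Type*} [CommSemiring R] [CommSemiring A] [Algebra R A]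
    {f : σ → A} {T : Subalgebra R A} (hf : ∀ i, f i ∈ T) (Q : MvPolynomial σ R) :
    aeval f Q ∈ T :=
  Algebra.adjoin_le (Set.range_subset_iff.2 hf)
    (by rw [← aeval_range]; exact AlgHom.mem_range_self _ Q)

theorem MvPolynomial.algHom_eqOn_supported {σ R A : Type*} [CommSemiring R] [Semiring A]
    [Algebra R A] {f g : MvPolynomial σ R →ₐ[R] A} {s : Set σ}
    (h : ∀ i ∈ s, f (X i) = g (X i)) :
    Set.EqOn f g (supported R s) := by
  rw [supported_eq_adjoin_X, AlgHom.eqOn_adjoin_iff]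
  rintro _ ⟨i, hi, rfl⟩
  exact h i hi

theorem totalD_X_inr (i : Fin p) (j : Fin q) (K : Fin p →₀ ℕ) :
    totalD p q i (X (Sum.inr (j, K))) = X (Sum.inr (j, K + Finsupp.single i 1)) :=
  mkDerivation_X _ _ _

theorem DmultiK_induction {motive : (Fin p →₀ ℕ) → JetRing p q → Prop}
    (step : ∀ i K Q, motive K Q → motive (K + Finsupp.single i 1) (totalD p q i Q))
    {K : Fin p →₀ ℕ} {Q : JetRing p q} (hQ : motive K Q) (L : Fin p →₀ ℕ) :
    motive (K + L) (DmultiK p q L Q) := by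
  have pow : ∀ i k K Q, motive K Q →
      motive (K + Finsupp.single i k) (((totalD p q i).toLinearMap ^ k) Q) := by
    intro i k
    induction k with
    | zero => intro K Q hQ; simpa using hQ
    | succ k ih =>
      intro K Q hQ
      rw [pow_succ', Module.End.mul_apply, Finsupp.single_add, ← add_assoc]
      exact step i _ _ (ih K Q hQ)
  have foldr : ∀ (l : List (Fin p)) K Q, motive K Q →
      motive (K + (l.map fun i => Finsupp.single i (L i)).sum)
        (l.foldr (fun i f => ((totalD p q i).toLinearMap ^ (L i)) * f) 1 Q) := by
    intro l
    induction l with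
    | nil => intro K Q hQ; simpa using hQ
    | cons i l ih =>
      intro K Q hQ
      rw [List.foldr_cons, Module.End.mul_apply, List.map_cons, List.sum_cons,
        add_left_comm, add_comm]
      exact pow i (L i) _ _ (ih K Q hQ)
  have hL : ((List.finRange p).map fun i => Finsupp.single i (L i)).sum = L := by
    rw [← Fin.sum_univ_def, Finsupp.univ_sum_single]
  have h := foldr (List.finRange p) K Q hQ
  rwa [hL] at h

theorem DmultiK_X_inr (L : Fin p →₀ ℕ) (j : Fin q) (K : Fin p →₀ ℕ) :
    DmultiK p q L (X (Sum.inr (j, K))) = X (Sum.inr (j, K + L)) :=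
  DmultiK_induction (motive := fun K Q => Q = X (Sum.inr (j, K)))
    (by rintro i K _ rfl; exact totalD_X_inr i j K) rfl L

namespace OrthoSystem

variable (S : OrthoSystem p q n)

theorem rlt_of_rlt_of_rk {a b c : Fin q × (Fin p →₀ ℕ)} (hab : S.rlt a b) (hbc : S.rk b c) :
    S.rlt a c := by
  refine ⟨S.rk_trans _ _ _ hab.1 hbc, ?_⟩
  rintro rfl
  exact hab.2 (S.rk_antisymm _ _ hab.1 hbc)

theorem rlt_add_right {i j : Fin q} {J K : Fin p →₀ ℕ} (h : S.rlt (i, J) (j, K))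
    (L : Fin p →₀ ℕ) : S.rlt (i, J + L) (j, K + L) := by
  refine ⟨(S.rk_compat i j J K L).1 h.1, fun he => h.2 ?_⟩
  simp only [Prod.mk.injEq, add_left_inj] at he ⊢
  exact he

theorem wellQuasiOrdered_rk : WellQuasiOrdered S.rk := by
  intro f
  obtain ⟨m, n, hmn, hj, hK⟩ :=
    ((Finite.wellQuasiOrdered (α := Fin q) (· = ·)).prod wellQuasiOrdered_le) f
  obtain ⟨L, hL⟩ := le_iff_exists_add.1 hK
  have hfn : f n = ((f m).1, (f m).2 + L) := Prod.ext hj.symm hL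
  refine ⟨m, n, hmn, ?_⟩
  rw [hfn]
  exact S.rk_pos _ _ L

theorem wellFounded_rlt : WellFounded S.rlt := by
  have : IsPreorder _ S.rk := { refl := S.rk_refl, trans := S.rk_trans }
  exact Subrelation.wf (fun {a b} h => ⟨h.1, fun hba => h.2 (S.rk_antisymm a b h.1 hba)⟩)
    S.wellQuasiOrdered_rk.wellFounded

def below (b : Fin q × (Fin p →₀ ℕ)) : Set (JetVar p q) :=
  Sum.elim (fun _ => True) (S.rlt · b)

def parametric : Set (JetVar p q) :=
  Sum.elim (fun _ => True) (fun w => ¬ S.principal w)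

theorem inB_iff_mem_supported {R : JetRing p q} :
    S.inB R ↔ R ∈ supported ℚ S.parametric := by
  rw [mem_supported]
  constructor
  · rintro h (i | w) hw
    · trivial
    · exact h w hw
  · exact fun h w hw => h hw

theorem P_mem_supported_below (hS : S.orthonomic) (α : Fin n) :
    S.P α ∈ supported ℚ (S.below (S.ii α, S.JJ α)) := by
  rw [mem_supported]
  rintro (i | w) hw
  · trivial
  · exact (hS α w hw).2

theorem totalD_mem_supported_below (j : Fin q) (K : Fin p →₀ ℕ) (i : Fin p) {Q : JetRing p q}
    (hQ : Q ∈ supported ℚ (S.below (j, K))) :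
    totalD p q i Q ∈ supported ℚ (S.below (j, K + Finsupp.single i 1)) := by
  have hmono : S.below (j, K) ⊆ S.below (j, K + Finsupp.single i 1) := by
    rintro (i | w) hw
    · trivial
    · exact S.rlt_of_rlt_of_rk hw (S.rk_pos j K _)
  refine (totalD p q i).mapsTo_adjoin ?_ ?_ hQ
  · exact Set.image_subset_iff.2 fun v hv => X_mem_supported.2 (hmono hv)
  · rintro _ ⟨v, hv, rfl⟩
    rcases v with l | ⟨k, M⟩
    · rw [totalD, mkDerivation_X]
      dsimp only
      split_ifs
      exacts [one_mem _, zero_mem _]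
    · rw [totalD_X_inr, SetLike.mem_coe, X_mem_supported]
      exact S.rlt_add_right hv _

theorem DmultiK_mem_supported_below {j : Fin q} {K : Fin p →₀ ℕ} {Q : JetRing p q}
    (hQ : Q ∈ supported ℚ (S.below (j, K))) (L : Fin p →₀ ℕ) :
    DmultiK p q L Q ∈ supported ℚ (S.below (j, K + L)) :=
  DmultiK_induction (motive := fun K Q => Q ∈ supported ℚ (S.below (j, K)))
    (fun i K _ hQ => S.totalD_mem_supported_below j K i hQ) hQ L

theorem DmultiK_P_mem_supported_below (hS : S.orthonomic) (α : Fin n) (L : Fin p →₀ ℕ) :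
    DmultiK p q L (S.P α) ∈ supported ℚ (S.below (S.ii α, S.JJ α + L)) :=
  S.DmultiK_mem_supported_below (S.P_mem_supported_below hS α) L

theorem X_sub_DmultiK_P_mem_diffIdeal (α : Fin n) (L : Fin p →₀ ℕ) :
    X (Sum.inr (S.ii α, S.JJ α + L)) - DmultiK p q L (S.P α) ∈ S.diffIdeal :=
  Ideal.subset_span ⟨α, L, by rw [map_sub, DmultiK_X_inr]⟩

open Classical in
/-- For principal `v` a representation `v = (i^β, J^β M)` is chosen and the values already
constructed below `v` are substituted into `D_M P^β`; the fallback `0` above `v` is never reached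
when the system is orthonomic. -/
noncomputable def reduceVar : Fin q × (Fin p →₀ ℕ) → JetRing p q :=
  S.wellFounded_rlt.fix fun v rec =>
    if h : S.principal v then
      aeval (Sum.elim (fun i => X (Sum.inl i)) fun w => if hw : S.rlt w v then rec w hw else 0)
        (DmultiK p q h.choose_spec.choose (S.P h.choose))
    else X (Sum.inr v)

noncomputable def reduceHom : JetRing p q →ₐ[ℚ] JetRing p q :=
  aeval (Sum.elim (fun i => X (Sum.inl i)) S.reduceVar)

@[simp]
theorem reduceHom_X_inl (i : Fin p) : S.reduceHom (X (Sum.inl i)) = X (Sum.inl i) :=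
  aeval_X _ _

@[simp]
theorem reduceHom_X_inr (w : Fin q × (Fin p →₀ ℕ)) :
    S.reduceHom (X (Sum.inr w)) = S.reduceVar w :=
  aeval_X _ _

theorem reduceVar_of_not_principal {v : Fin q × (Fin p →₀ ℕ)} (h : ¬ S.principal v) :
    S.reduceVar v = X (Sum.inr v) := by
  rw [reduceVar, WellFounded.fix_eq, dif_neg h]

theorem reduceVar_of_eq (hS : S.orthonomic) (hpass : S.passive) {β : Fin n}
    {M : Fin p →₀ ℕ} {v : Fin q × (Fin p →₀ ℕ)} (hv : v = (S.ii β, S.JJ β + M)) :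
    S.reduceVar v = S.reduceHom (DmultiK p q M (S.P β)) := by
  have h : S.principal v := ⟨β, M, hv⟩
  rw [reduceVar, WellFounded.fix_eq, dif_pos h,
    hpass _ β _ M (h.choose_spec.choose_spec.symm.trans hv)]
  refine MvPolynomial.algHom_eqOn_supported ?_ (S.DmultiK_P_mem_supported_below hS β M)
  rintro (i | w) hw
  · simp only [aeval_X, Sum.elim_inl, reduceHom_X_inl]
  · rw [aeval_X, Sum.elim_inr, dif_pos (hv ▸ hw), reduceHom_X_inr, reduceVar]

theorem reduceVar_mem_supported_parametric (v : Fin q × (Fin p →₀ ℕ)) :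
    S.reduceVar v ∈ supported ℚ S.parametric := by
  induction v using S.wellFounded_rlt.induction with
  | _ v ih =>
  rw [reduceVar, WellFounded.fix_eq]
  split_ifs with h
  · refine MvPolynomial.aeval_mem ?_ _
    rintro (i | w)
    · exact X_mem_supported.2 trivial
    · dsimp only [Sum.elim_inr]
      split_ifs with hw
      exacts [ih w hw, zero_mem _]
  · exact X_mem_supported.2 h

theorem reduceHom_mem_supported_parametric (Q : JetRing p q) :
    S.reduceHom Q ∈ supported ℚ S.parametric := by
  refine MvPolynomial.aeval_mem ?_ Q
  rintro (i | w)
  · exact X_mem_supported.2 trivial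
  · exact S.reduceVar_mem_supported_parametric w

theorem reduceHom_eq_self {R : JetRing p q} (hR : R ∈ supported ℚ S.parametric) :
    S.reduceHom R = R := by
  refine MvPolynomial.algHom_eqOn_supported (g := AlgHom.id ℚ _) ?_ hR
  rintro (i | w) hw
  · exact S.reduceHom_X_inl i
  · rw [reduceHom_X_inr, S.reduceVar_of_not_principal hw, AlgHom.id_apply]

theorem diffIdeal_le_ker (hS : S.orthonomic) (hpass : S.passive) :
    S.diffIdeal ≤ RingHom.ker S.reduceHom := by
  refine Ideal.span_le.2 ?_
  rintro _ ⟨α, L, rfl⟩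
  rw [SetLike.mem_coe, RingHom.mem_ker, map_sub, DmultiK_X_inr, map_sub, reduceHom_X_inr,
    S.reduceVar_of_eq hS hpass rfl, sub_self]

theorem mkₐ_comp_reduceHom (hS : S.orthonomic) (hpass : S.passive) :
    (Ideal.Quotient.mkₐ ℚ S.diffIdeal).comp S.reduceHom =
      Ideal.Quotient.mkₐ ℚ S.diffIdeal := by
  refine MvPolynomial.algHom_ext fun v => ?_
  rcases v with i | w
  · simp
  induction w using S.wellFounded_rlt.induction with
  | _ w ih =>
  by_cases h : S.principal w
  · obtain ⟨α, L, rfl⟩ := h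
    have hP := MvPolynomial.algHom_eqOn_supported
      (f := (Ideal.Quotient.mkₐ ℚ S.diffIdeal).comp S.reduceHom)
      (g := Ideal.Quotient.mkₐ ℚ S.diffIdeal) (s := S.below (S.ii α, S.JJ α + L))
      (fun v hv => by
        rcases v with i | w
        · simp
        · exact ih w hv)
      (S.DmultiK_P_mem_supported_below hS α L)
    rw [AlgHom.comp_apply, reduceHom_X_inr, S.reduceVar_of_eq hS hpass rfl]
    refine hP.trans (Ideal.Quotient.eq.2 ?_).symm
    exact S.X_sub_DmultiK_P_mem_diffIdeal α L
  · rw [AlgHom.comp_apply, reduceHom_X_inr, S.reduceVar_of_not_principal h]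

theorem sub_reduceHom_mem_diffIdeal (hS : S.orthonomic) (hpass : S.passive) (Q : JetRing p q) :
    Q - S.reduceHom Q ∈ S.diffIdeal :=
  Ideal.Quotient.eq.1 (DFunLike.congr_fun (S.mkₐ_comp_reduceHom hS hpass) Q).symm

end OrthoSystem

/-- The reduction to parametric derivatives is well defined: for a passive
orthonomic system, any `Q ∈ A` has a unique reduction `Q̃ ∈ B` with
`Q̃ ≡ Q mod Δ` (in particular the result of the reduction algorithm does not
depend on any choices made). -/
theorem reduction_well_defined (S : OrthoSystem p q n)
    (hS : S.orthonomic) (hpass : S.passive) (Q : JetRing p q) :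
    ∃! R : JetRing p q, S.inB R ∧ Q - R ∈ S.diffIdeal := by
  have hQ := S.sub_reduceHom_mem_diffIdeal hS hpass Q
  have hQB := S.reduceHom_mem_supported_parametric Q
  refine ⟨S.reduceHom Q, ⟨S.inB_iff_mem_supported.2 hQB, hQ⟩, ?_⟩
  rintro R ⟨hRB, hRQ⟩
  have hR : R - S.reduceHom Q ∈ RingHom.ker S.reduceHom := by
    refine S.diffIdeal_le_ker hS hpass ?_
    simpa only [sub_sub_sub_cancel_left] using sub_mem hQ hRQ
  rwa [RingHom.mem_ker, map_sub, S.reduceHom_eq_self (S.inB_iff_mem_supported.1 hRB),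
    S.reduceHom_eq_self hQB, sub_eq_zero] at hR
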